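/- arXiv:2212.14782 — 2 statements merged into one kernel-verified Lean document; each statement's English description precedes it below -/
import Mathlib

section
/- For every M > 0 there exists a constant C > 0, depending only on K, M, n, α, β and m, such that for all t > 0 and all y ∈ ℝⁿ with |y| ≤ Mt, one has limsup_{k→∞} 2^{−k} m(2^k t, 0, 2^k y) ≤ m(t, 0, y) + C. -/
open MeasureTheory Filter

noncomputable section

/-- A pair `(η, η')` is admissible on `[a, b]`: the candidate derivative `η'` is interval
integrable and `η` is its indefinite integral, i.e. `η` is absolutely continuous on `[a, b]`
with a.e. derivative `η'`. -/
def AdmissibleOn (n : ℕ) (a b : ℝ) (η η' : ℝ → EuclideanSpace ℝ (Fin n)) : Prop :=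
  IntervalIntegrable η' volume a b ∧
    ∀ s ∈ Set.Icc a b, η s = η a + ∫ u in a..s, η' u

/-- The structural hypotheses on the Lagrangian `L`: continuity, `ℤ^(n+1)`-periodicity in the
first two (space-time) arguments, convexity in the velocity argument, and two-sided growth
bounds of order `m`. -/
structure IsLagrangian (n : ℕ) (α β K m : ℝ)
    (L : EuclideanSpace ℝ (Fin n) → ℝ → EuclideanSpace ℝ (Fin n) → ℝ) : Prop where
  cont : Continuous fun q : (EuclideanSpace ℝ (Fin n)) × ℝ × (EuclideanSpace ℝ (Fin n)) =>
    L q.1 q.2.1 q.2.2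
  periodic : ∀ (x v : EuclideanSpace ℝ (Fin n)) (t : ℝ) (w : Fin n → ℤ) (j : ℤ),
    L (WithLp.toLp 2 (fun i => x i + (w i : ℝ))) (t + j) v = L x t v
  convexV : ∀ x t, ConvexOn ℝ Set.univ (fun v => L x t v)
  lower_bound : ∀ x t v, α * ‖v‖ ^ m - K ≤ L x t v
  upper_bound : ∀ x t v, L x t v ≤ β * ‖v‖ ^ m + K

/-- The minimal cost `m(t, x, y)` to travel from `x` to `y` in time `t`, i.e. the infimum of
`∫_0^t L(η(s), s, η'(s)) ds` over absolutely continuous curves `η : [0, t] → ℝⁿ` with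
`η 0 = x` and `η t = y` (and a well-defined, i.e. integrable, Lagrangian cost). -/
def mCost (n : ℕ) (L : EuclideanSpace ℝ (Fin n) → ℝ → EuclideanSpace ℝ (Fin n) → ℝ)
    (t : ℝ) (x y : EuclideanSpace ℝ (Fin n)) : ℝ :=
  sInf {c : ℝ | ∃ η η' : ℝ → EuclideanSpace ℝ (Fin n),
    AdmissibleOn n 0 t η η' ∧ η 0 = x ∧ η t = y ∧
    IntervalIntegrable (fun s => L (η s) s (η' s)) volume 0 t ∧
    c = ∫ s in (0:ℝ)..t, L (η s) s (η' s)}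

/-!
Take a near-minimiser `γ` of `m(T, 0, Y)`. Following `γ` and then a copy of it translated by the
integer time `⌊T⌋ + 2` and by the lattice point nearest to `Y` reaches `2Y` at time about `2T`; by
periodicity the copy costs as much as `γ`, and the connecting segments cost `O(1)`. The copy has to
be three time units shorter to fit: by pigeonhole `γ` has a window of length `4` on which its energy
`∫ |γ'|^m`, hence its displacement, is bounded, and this window is replaced by a segment of
duration `1`. This gives `m(2T, 0, 2Y) ≤ 2 m(T, 0, Y) + C₀` for `T ≥ 8`, so the rescaled costs
`2⁻ᵏ m(2ᵏ t, 0, 2ᵏ y)` increase by at most `C₀ 2⁻ᵏ⁻¹` per step once `2ᵏ t ≥ 8`; the first such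
scale is compared with `m(t, 0, y)` through the straight-line upper bound and the lower bound `-Kt`.
-/

open Set
open scoped Interval

section Concat

variable {E : Type*} {a b c d s : ℝ} {f g : ℝ → E}

def concatAt (b : ℝ) (f g : ℝ → E) (s : ℝ) : E := if s ≤ b then f s else g s

lemma concatAt_of_le (h : s ≤ b) : concatAt b f g s = f s := if_pos h

lemma concatAt_of_lt (h : b < s) : concatAt b f g s = g s := if_neg h.not_ge

lemma eqOn_concatAt_left (ha : a ≤ b) (hs : s ≤ b) : EqOn (concatAt b f g) f (Ι a s) :=
  fun _ hx => concatAt_of_le (hx.2.trans (max_le ha hs))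

lemma eqOn_concatAt_right (ha : b ≤ a) (hs : b ≤ s) : EqOn (concatAt b f g) g (Ι a s) :=
  fun _ hx => concatAt_of_lt ((le_min ha hs).trans_lt hx.1)

variable [NormedAddCommGroup E]

lemma IntervalIntegrable.mono_Icc (hf : IntervalIntegrable f volume a b) (hc : c ∈ Icc a b)
    (hd : d ∈ Icc a b) : IntervalIntegrable f volume c d :=
  hf.mono_set (uIcc_subset_uIcc (Icc_subset_uIcc hc) (Icc_subset_uIcc hd))

lemma IntervalIntegrable.concatAt (hf : IntervalIntegrable f volume a b)
    (hg : IntervalIntegrable g volume b c) (hab : a ≤ b) (hbc : b ≤ c) :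
    IntervalIntegrable (concatAt b f g) volume a c :=
  (hf.congr (eqOn_concatAt_left hab le_rfl).symm).trans
    (hg.congr (eqOn_concatAt_right le_rfl hbc).symm)

variable [NormedSpace ℝ E]

lemma integral_concatAt (hf : IntervalIntegrable f volume a b)
    (hg : IntervalIntegrable g volume b c) (hab : a ≤ b) (hbc : b ≤ c) :
    ∫ u in a..c, concatAt b f g u = (∫ u in a..b, f u) + ∫ u in b..c, g u := by
  rw [← intervalIntegral.integral_add_adjacent_intervals
      (hf.congr (eqOn_concatAt_left hab le_rfl).symm)
      (hg.congr (eqOn_concatAt_right le_rfl hbc).symm),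
    intervalIntegral.integral_congr_ae (.of_forall (eqOn_concatAt_left hab le_rfl)),
    intervalIntegral.integral_congr_ae (.of_forall (eqOn_concatAt_right le_rfl hbc))]

end Concat

section LinePath

variable {V : Type*} [AddCommGroup V] [Module ℝ V] {a b : ℝ}

def linePath (a b : ℝ) (P Q : V) (s : ℝ) : V := P + ((s - a) / (b - a)) • (Q - P)

lemma linePath_left (P Q : V) : linePath a b P Q a = P := by
  simp [linePath]

lemma linePath_right (hab : a ≠ b) (P Q : V) : linePath a b P Q b = Q := by
  simp [linePath, div_self (sub_ne_zero.2 hab.symm)]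

lemma continuous_linePath [TopologicalSpace V] [IsTopologicalAddGroup V] [ContinuousSMul ℝ V]
    (a b : ℝ) (P Q : V) : Continuous (linePath a b P Q) := by
  unfold linePath
  fun_prop

end LinePath

section Admissible

variable {n : ℕ} {a b c d s : ℝ} {η η' ζ ζ' : ℝ → EuclideanSpace ℝ (Fin n)}

lemma AdmissibleOn.sub_eq_integral (h : AdmissibleOn n a b η η') (hc : c ∈ Icc a b)
    (hs : s ∈ Icc a b) : η s - η c = ∫ u in c..s, η' u := by
  have ha : a ∈ Icc a b := ⟨le_rfl, hc.1.trans hc.2⟩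
  rw [h.2 s hs, h.2 c hc, add_sub_add_left_eq_sub,
    intervalIntegral.integral_interval_sub_left (h.1.mono_Icc ha hs) (h.1.mono_Icc ha hc)]

lemma AdmissibleOn.mono (h : AdmissibleOn n a b η η') (hac : a ≤ c) (hcd : c ≤ d)
    (hdb : d ≤ b) : AdmissibleOn n c d η η' := by
  have hsub : Icc c d ⊆ Icc a b := Icc_subset_Icc hac hdb
  refine ⟨h.1.mono_Icc (hsub (left_mem_Icc.2 hcd)) (hsub (right_mem_Icc.2 hcd)),
    fun s hs => ?_⟩
  rw [← h.sub_eq_integral (hsub (left_mem_Icc.2 hcd)) (hsub hs), add_sub_cancel]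

lemma AdmissibleOn.concatAt (h₁ : AdmissibleOn n a b η η') (h₂ : AdmissibleOn n b c ζ ζ')
    (hab : a ≤ b) (hbc : b ≤ c) (hb : η b = ζ b) :
    AdmissibleOn n a c (concatAt b η ζ) (concatAt b η' ζ') := by
  refine ⟨h₁.1.concatAt h₂.1 hab hbc, fun s hs => ?_⟩
  rw [concatAt_of_le hab]
  rcases le_or_gt s b with hsb | hbs
  · rw [concatAt_of_le hsb, intervalIntegral.integral_congr_ae
      (.of_forall (eqOn_concatAt_left hab hsb)), h₁.2 s ⟨hs.1, hsb⟩]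
  · have hs' : s ∈ Icc b c := ⟨hbs.le, hs.2⟩
    have hζ' : IntervalIntegrable ζ' volume b s := h₂.1.mono_Icc (left_mem_Icc.2 hbc) hs'
    rw [concatAt_of_lt hbs, ← intervalIntegral.integral_add_adjacent_intervals
        (h₁.1.congr (eqOn_concatAt_left hab le_rfl).symm)
        (hζ'.congr (eqOn_concatAt_right le_rfl hbs.le).symm),
      intervalIntegral.integral_congr_ae (.of_forall (eqOn_concatAt_left hab le_rfl)),
      intervalIntegral.integral_congr_ae (.of_forall (eqOn_concatAt_right le_rfl hbs.le)),
      ← add_assoc, ← h₁.2 b ⟨hab, le_rfl⟩, hb, h₂.2 s hs']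

lemma AdmissibleOn.translate (h : AdmissibleOn n a b η η') (τ : ℝ)
    (w : EuclideanSpace ℝ (Fin n)) :
    AdmissibleOn n (a + τ) (b + τ) (fun s => η (s - τ) + w) (fun s => η' (s - τ)) := by
  refine ⟨h.1.comp_sub_right τ, fun s hs => ?_⟩
  simp only [intervalIntegral.integral_comp_sub_right, add_sub_cancel_right]
  rw [add_right_comm,
    ← h.2 (s - τ) ⟨le_sub_iff_add_le.2 hs.1, sub_le_iff_le_add.2 hs.2⟩]

lemma admissibleOn_linePath (a b : ℝ) (P Q : EuclideanSpace ℝ (Fin n)) :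
    AdmissibleOn n a b (linePath a b P Q) (fun _ => (b - a)⁻¹ • (Q - P)) := by
  refine ⟨intervalIntegrable_const, fun s _ => ?_⟩
  rw [intervalIntegral.integral_const, linePath_left, linePath, smul_smul, div_eq_mul_inv]

end Admissible

section Lagrangian

variable {n : ℕ} {α β K m : ℝ} {L : EuclideanSpace ℝ (Fin n) → ℝ → EuclideanSpace ℝ (Fin n) → ℝ}
  {a b c d s D : ℝ} {η η' ζ ζ' : ℝ → EuclideanSpace ℝ (Fin n)}

def intVec (w : Fin n → ℤ) : EuclideanSpace ℝ (Fin n) := WithLp.toLp 2 fun i => (w i : ℝ)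

@[simp]
lemma intVec_zero : intVec (0 : Fin n → ℤ) = 0 := by
  ext i; simp [intVec]

lemma IsLagrangian.neg_le (hL : IsLagrangian n α β K m L) (hα : 0 ≤ α)
    (x : EuclideanSpace ℝ (Fin n)) (t : ℝ) (v : EuclideanSpace ℝ (Fin n)) : -K ≤ L x t v := by
  have := hL.lower_bound x t v
  have : 0 ≤ α * ‖v‖ ^ m := by positivity
  linarith

lemma IsLagrangian.periodic_sub (hL : IsLagrangian n α β K m L) (j : ℤ) (w : Fin n → ℤ) :
    L (η (s - j) + intVec w) s (η' (s - j)) = L (η (s - j)) (s - j) (η' (s - j)) := by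
  have h := hL.periodic (η (s - j)) (η' (s - j)) (s - j) w j
  rwa [sub_add_cancel] at h

lemma lagrangian_concatAt :
    (fun s => L (concatAt b η ζ s) s (concatAt b η' ζ' s)) =
      concatAt b (fun s => L (η s) s (η' s)) (fun s => L (ζ s) s (ζ' s)) := by
  funext s
  unfold concatAt
  split_ifs <;> rfl

variable (L) in
structure AdmissiblePath (a b : ℝ) where
  curve : ℝ → EuclideanSpace ℝ (Fin n)
  vel : ℝ → EuclideanSpace ℝ (Fin n)
  le : a ≤ b
  admissibleOn : AdmissibleOn n a b curve vel
  integrable_lagrangian : IntervalIntegrable (fun s => L (curve s) s (vel s)) volume a b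

namespace AdmissiblePath

def cost (γ : AdmissiblePath L a b) : ℝ := ∫ s in a..b, L (γ.curve s) s (γ.vel s)

lemma neg_mul_le_cost (hL : IsLagrangian n α β K m L) (hα : 0 ≤ α) (γ : AdmissiblePath L a b) :
    -(K * (b - a)) ≤ γ.cost := by
  have := intervalIntegral.integral_mono_on γ.le intervalIntegrable_const
    γ.integrable_lagrangian fun s _ => hL.neg_le hα (γ.curve s) s (γ.vel s)
  simpa [cost, mul_comm] using this

def restrict (γ : AdmissiblePath L a b) (hac : a ≤ c) (hcd : c ≤ d) (hdb : d ≤ b) :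
    AdmissiblePath L c d where
  curve := γ.curve
  vel := γ.vel
  le := hcd
  admissibleOn := γ.admissibleOn.mono hac hcd hdb
  integrable_lagrangian :=
    γ.integrable_lagrangian.mono_Icc ⟨hac, hcd.trans hdb⟩ ⟨hac.trans hcd, hdb⟩

@[simp]
lemma restrict_curve (γ : AdmissiblePath L a b) (hac : a ≤ c) (hcd : c ≤ d) (hdb : d ≤ b) :
    (γ.restrict hac hcd hdb).curve = γ.curve := rfl

lemma cost_restrict_add (γ : AdmissiblePath L a b) (hc : c ∈ Icc a b) :
    (γ.restrict le_rfl hc.1 hc.2).cost + (γ.restrict hc.1 hc.2 le_rfl).cost = γ.cost :=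
  intervalIntegral.integral_add_adjacent_intervals
    (γ.restrict le_rfl hc.1 hc.2).integrable_lagrangian
    (γ.restrict hc.1 hc.2 le_rfl).integrable_lagrangian

def append (γ : AdmissiblePath L a b) (δ : AdmissiblePath L b c) (h : γ.curve b = δ.curve b) :
    AdmissiblePath L a c where
  curve := concatAt b γ.curve δ.curve
  vel := concatAt b γ.vel δ.vel
  le := γ.le.trans δ.le
  admissibleOn := γ.admissibleOn.concatAt δ.admissibleOn γ.le δ.le h
  integrable_lagrangian := by
    rw [lagrangian_concatAt]
    exact γ.integrable_lagrangian.concatAt δ.integrable_lagrangian γ.le δ.le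

section append

variable (γ : AdmissiblePath L a b) (δ : AdmissiblePath L b c) (h : γ.curve b = δ.curve b)

@[simp]
lemma append_curve_left : (γ.append δ h).curve a = γ.curve a := concatAt_of_le γ.le

@[simp]
lemma append_curve_right : (γ.append δ h).curve c = δ.curve c := by
  rcases δ.le.lt_or_eq with hbc | rfl
  · exact concatAt_of_lt hbc
  · exact (concatAt_of_le le_rfl).trans h

lemma cost_append : (γ.append δ h).cost = γ.cost + δ.cost := by
  rw [cost, append, lagrangian_concatAt]
  exact integral_concatAt γ.integrable_lagrangian δ.integrable_lagrangian γ.le δ.le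

end append

def translate (hL : IsLagrangian n α β K m L) (γ : AdmissiblePath L a b) (j : ℤ)
    (w : Fin n → ℤ) {a' b' : ℝ} (ha : a + j = a') (hb : b + j = b') : AdmissiblePath L a' b' where
  curve s := γ.curve (s - j) + intVec w
  vel s := γ.vel (s - j)
  le := ha ▸ hb ▸ add_le_add_left γ.le _
  admissibleOn := ha ▸ hb ▸ γ.admissibleOn.translate j (intVec w)
  integrable_lagrangian := by
    simp only [hL.periodic_sub]
    exact ha ▸ hb ▸ γ.integrable_lagrangian.comp_sub_right (j : ℝ)

@[simp]
lemma translate_curve (hL : IsLagrangian n α β K m L) (γ : AdmissiblePath L a b) (j : ℤ)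
    (w : Fin n → ℤ) {a' b' : ℝ} (ha : a + j = a') (hb : b + j = b') (s : ℝ) :
    (γ.translate hL j w ha hb).curve s = γ.curve (s - j) + intVec w := rfl

lemma cost_translate (hL : IsLagrangian n α β K m L) (γ : AdmissiblePath L a b) (j : ℤ)
    (w : Fin n → ℤ) {a' b' : ℝ} (ha : a + j = a') (hb : b + j = b') :
    (γ.translate hL j w ha hb).cost = γ.cost := by
  subst ha hb
  simp only [cost, translate, hL.periodic_sub]
  rw [intervalIntegral.integral_comp_sub_right (fun u => L (γ.curve u) u (γ.vel u))]
  simp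

def line (hL : IsLagrangian n α β K m L) (hab : a < b) (P Q : EuclideanSpace ℝ (Fin n)) :
    AdmissiblePath L a b where
  curve := linePath a b P Q
  vel _ := (b - a)⁻¹ • (Q - P)
  le := hab.le
  admissibleOn := admissibleOn_linePath a b P Q
  integrable_lagrangian := (hL.cont.comp ((continuous_linePath a b P Q).prodMk
    (continuous_id.prodMk continuous_const))).intervalIntegrable a b

@[simp]
lemma line_curve_left (hL : IsLagrangian n α β K m L) (hab : a < b)
    (P Q : EuclideanSpace ℝ (Fin n)) : (line hL hab P Q).curve a = P :=
  linePath_left P Q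

@[simp]
lemma line_curve_right (hL : IsLagrangian n α β K m L) (hab : a < b)
    (P Q : EuclideanSpace ℝ (Fin n)) : (line hL hab P Q).curve b = Q :=
  linePath_right hab.ne P Q

lemma cost_line_le (hL : IsLagrangian n α β K m L) (hβ : 0 ≤ β) (hm : 0 ≤ m) (hab : a < b)
    {P Q : EuclideanSpace ℝ (Fin n)} (hPQ : ‖Q - P‖ ≤ D * (b - a)) :
    (line hL hab P Q).cost ≤ (b - a) * (β * D ^ m + K) := by
  have hv : ‖(b - a)⁻¹ • (Q - P)‖ ≤ D := by
    rw [norm_smul, norm_inv, Real.norm_of_nonneg (sub_nonneg.2 hab.le),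
      inv_mul_le_iff₀ (sub_pos.2 hab), mul_comm]
    exact hPQ
  have hvm := Real.rpow_le_rpow (norm_nonneg _) hv hm
  have := intervalIntegral.integral_mono_on hab.le (line hL hab P Q).integrable_lagrangian
    intervalIntegrable_const fun s _ =>
      (hL.upper_bound _ s _).trans (add_le_add_left (mul_le_mul_of_nonneg_left hvm hβ) K)
  rw [intervalIntegral.integral_const, smul_eq_mul] at this
  exact this

lemma cost_line_le_two_mul (hL : IsLagrangian n α β K m L) (hβ : 0 ≤ β) (hK : 0 ≤ K) (hm : 0 ≤ m)
    (hab : a < b) (h₁ : 1 ≤ b - a) (h₂ : b - a ≤ 2) {P Q : EuclideanSpace ℝ (Fin n)}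
    (hD : 0 ≤ D) (hPQ : ‖Q - P‖ ≤ D) : (line hL hab P Q).cost ≤ 2 * (β * D ^ m + K) :=
  (cost_line_le hL hβ hm hab (hPQ.trans (le_mul_of_one_le_right hD h₁))).trans
    (mul_le_mul_of_nonneg_right h₂ (by positivity))

end AdmissiblePath

end Lagrangian

section Cost

variable {n : ℕ} {α β K m : ℝ} {L : EuclideanSpace ℝ (Fin n) → ℝ → EuclideanSpace ℝ (Fin n) → ℝ}
  {t D ε : ℝ} {x y : EuclideanSpace ℝ (Fin n)}

open AdmissiblePath

lemma AdmissiblePath.cost_mem (γ : AdmissiblePath L 0 t) (hx : γ.curve 0 = x)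
    (hy : γ.curve t = y) :
    γ.cost ∈ {c : ℝ | ∃ η η' : ℝ → EuclideanSpace ℝ (Fin n),
      AdmissibleOn n 0 t η η' ∧ η 0 = x ∧ η t = y ∧
      IntervalIntegrable (fun s => L (η s) s (η' s)) volume 0 t ∧
      c = ∫ s in (0:ℝ)..t, L (η s) s (η' s)} :=
  ⟨γ.curve, γ.vel, γ.admissibleOn, hx, hy, γ.integrable_lagrangian, rfl⟩

lemma mCost_le_cost (hL : IsLagrangian n α β K m L) (hα : 0 ≤ α) (γ : AdmissiblePath L 0 t)
    (hx : γ.curve 0 = x) (hy : γ.curve t = y) : mCost n L t x y ≤ γ.cost := by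
  refine csInf_le ⟨-(K * t), ?_⟩ (γ.cost_mem hx hy)
  rintro _ ⟨η, η', hadm, -, -, hint, rfl⟩
  have := neg_mul_le_cost hL hα ⟨η, η', γ.le, hadm, hint⟩
  rwa [sub_zero] at this

lemma exists_cost_lt_mCost_add (hL : IsLagrangian n α β K m L) (ht : 0 < t)
    (x y : EuclideanSpace ℝ (Fin n)) (hε : 0 < ε) :
    ∃ γ : AdmissiblePath L 0 t, γ.curve 0 = x ∧ γ.curve t = y ∧ γ.cost < mCost n L t x y + ε := by
  obtain ⟨_, ⟨η, η', hadm, hx, hy, hint, rfl⟩, hlt⟩ :=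
    Real.lt_sInf_add_pos ⟨_, (line hL ht x y).cost_mem (x := x) (y := y) (by simp) (by simp)⟩ hε
  exact ⟨⟨η, η', ht.le, hadm, hint⟩, hx, hy, hlt⟩

lemma neg_mul_le_mCost (hL : IsLagrangian n α β K m L) (hα : 0 ≤ α) (ht : 0 < t)
    (x y : EuclideanSpace ℝ (Fin n)) : -(K * t) ≤ mCost n L t x y :=
  le_of_forall_pos_lt_add fun ε hε => by
    obtain ⟨γ, -, -, hγ⟩ := exists_cost_lt_mCost_add hL ht x y hε
    have := γ.neg_mul_le_cost hL hα
    rw [sub_zero] at this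
    linarith

lemma mCost_le_of_norm_sub_le (hL : IsLagrangian n α β K m L) (hα : 0 ≤ α) (hβ : 0 ≤ β)
    (hm : 0 ≤ m) (ht : 0 < t) (hxy : ‖y - x‖ ≤ D * t) :
    mCost n L t x y ≤ t * (β * D ^ m + K) := by
  have := cost_line_le (P := x) (Q := y) hL hβ hm ht (by rwa [sub_zero])
  rw [sub_zero] at this
  exact (mCost_le_cost hL hα (line hL ht x y) (by simp) (by simp)).trans this

end Cost

section Energy

variable {n : ℕ} {α β K m : ℝ} {L : EuclideanSpace ℝ (Fin n) → ℝ → EuclideanSpace ℝ (Fin n) → ℝ}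
  {a b c d T ℓ : ℝ} {η η' : ℝ → EuclideanSpace ℝ (Fin n)}

lemma le_rpow_add_one {r : ℝ} (hr : 0 ≤ r) (hm : 1 ≤ m) : r ≤ r ^ m + 1 := by
  rcases le_total r 1 with h | h
  · linarith [Real.rpow_nonneg hr m]
  · linarith [Real.self_le_rpow_of_one_le h hm]

lemma AdmissibleOn.norm_sub_le (h : AdmissibleOn n a b η η') (hm : 1 ≤ m)
    (hc : c ∈ Icc a b) (hd : d ∈ Icc a b) (hcd : c ≤ d)
    (hE : IntervalIntegrable (fun s => ‖η' s‖ ^ m) volume c d) :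
    ‖η d - η c‖ ≤ (∫ s in c..d, ‖η' s‖ ^ m) + (d - c) := by
  rw [h.sub_eq_integral hc hd]
  calc ‖∫ s in c..d, η' s‖ ≤ ∫ s in c..d, ‖η' s‖ :=
        intervalIntegral.norm_integral_le_integral_norm hcd
    _ ≤ ∫ s in c..d, (‖η' s‖ ^ m + 1) :=
        intervalIntegral.integral_mono_on hcd (h.1.mono_Icc hc hd).norm
          (hE.add intervalIntegrable_const) fun s _ => le_rpow_add_one (norm_nonneg _) hm
    _ = (∫ s in c..d, ‖η' s‖ ^ m) + (d - c) := by
        rw [intervalIntegral.integral_add hE intervalIntegrable_const,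
          intervalIntegral.integral_const, smul_eq_mul, mul_one]

namespace AdmissiblePath

lemma intervalIntegrable_rpow_norm_vel (hL : IsLagrangian n α β K m L) (hα : 0 < α)
    (γ : AdmissiblePath L a b) : IntervalIntegrable (fun s => ‖γ.vel s‖ ^ m) volume a b := by
  have hbound : IntervalIntegrable (fun s => (L (γ.curve s) s (γ.vel s) + K) / α) volume a b :=
    (γ.integrable_lagrangian.add intervalIntegrable_const).div_const α
  have hvel := γ.admissibleOn.1
  rw [intervalIntegrable_iff] at hbound hvel ⊢
  refine hbound.mono' (hvel.aestronglyMeasurable.norm.aemeasurable.pow_const m).aestronglyMeasurable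
    (.of_forall fun s => ?_)
  rw [Real.norm_of_nonneg (by positivity), le_div_iff₀ hα]
  linarith [hL.lower_bound (γ.curve s) s (γ.vel s)]

lemma mul_integral_rpow_norm_vel_le (hL : IsLagrangian n α β K m L) (hα : 0 < α)
    (γ : AdmissiblePath L a b) :
    α * ∫ s in a..b, ‖γ.vel s‖ ^ m ≤ γ.cost + K * (b - a) := by
  have hE := (γ.intervalIntegrable_rpow_norm_vel hL hα).const_mul α
  have := intervalIntegral.integral_mono_on γ.le (hE.sub intervalIntegrable_const)
    γ.integrable_lagrangian fun s _ => hL.lower_bound (γ.curve s) s (γ.vel s)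
  rw [intervalIntegral.integral_sub hE intervalIntegrable_const,
    intervalIntegral.integral_const_mul, intervalIntegral.integral_const, smul_eq_mul] at this
  rw [cost]
  linarith

end AdmissiblePath

lemma exists_integral_block_le {f : ℝ → ℝ} (hf : IntervalIntegrable f volume 0 T)
    (hf₀ : ∀ s ∈ Icc 0 T, 0 ≤ f s) (hℓ : 0 < ℓ) (hT : 2 * ℓ ≤ T) :
    ∃ q, 0 ≤ q ∧ q + ℓ ≤ T ∧ ∫ s in q..q + ℓ, f s ≤ 2 * ℓ / T * ∫ s in 0..T, f s := by
  set N := ⌊T / ℓ⌋₊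
  have hTℓ : 2 ≤ T / ℓ := (le_div_iff₀ hℓ).2 hT
  have hN₁ : (1 : ℝ) ≤ N := by exact_mod_cast Nat.le_floor (by norm_num; linarith)
  have hNℓ : N * ℓ ≤ T := (le_div_iff₀ hℓ).1 (Nat.floor_le (by linarith))
  have hTN : T ≤ 2 * ℓ * N := by
    have := (div_lt_iff₀ hℓ).1 (Nat.lt_floor_add_one (T / ℓ))
    nlinarith
  have hN : (0 : ℝ) < N := by linarith
  have hblock : ∀ k < N, IntervalIntegrable f volume (k * ℓ) ((k + 1 : ℕ) * ℓ) := by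
    intro k hk
    have hk₁ : ((k + 1 : ℕ) : ℝ) * ℓ ≤ T := by
      have : ((k + 1 : ℕ) : ℝ) ≤ N := by exact_mod_cast hk
      nlinarith
    exact hf.mono_Icc ⟨by positivity, by push_cast at hk₁; nlinarith⟩ ⟨by positivity, hk₁⟩
  have hI : ∫ s in 0..N * ℓ, f s ≤ ∫ s in 0..T, f s :=
    intervalIntegral.integral_mono_interval le_rfl (by positivity) hNℓ
      ((ae_restrict_iff' measurableSet_Ioc).2
        (.of_forall fun s hs => hf₀ s (Ioc_subset_Icc_self hs))) hf
  have hsum : ∑ k ∈ Finset.range N, ∫ s in k * ℓ..(k + 1 : ℕ) * ℓ, f s ≤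
      ∑ k ∈ Finset.range N, (∫ s in 0..T, f s) / N := by
    rw [intervalIntegral.sum_integral_adjacent_intervals hblock, Finset.sum_const,
      Finset.card_range, nsmul_eq_mul, mul_div_cancel₀ _ hN.ne']
    simpa using hI
  obtain ⟨k, hk, hkI⟩ := Finset.exists_le_of_sum_le
    (Finset.nonempty_range_iff.2 (by exact_mod_cast hN.ne')) hsum
  have hk₁ : ((k : ℝ) + 1) * ℓ ≤ T := by
    have : (k : ℝ) + 1 ≤ N := by exact_mod_cast Finset.mem_range.1 hk
    nlinarith
  have hI₀ : 0 ≤ ∫ s in 0..T, f s := intervalIntegral.integral_nonneg (by linarith) hf₀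
  refine ⟨k * ℓ, by positivity, by linarith, ?_⟩
  calc ∫ s in k * ℓ..k * ℓ + ℓ, f s = ∫ s in k * ℓ..(k + 1 : ℕ) * ℓ, f s := by push_cast; ring_nf
    _ ≤ (∫ s in 0..T, f s) / N := hkI
    _ ≤ (∫ s in 0..T, f s) / N * (2 * ℓ * N / T) :=
        le_mul_of_one_le_right (by positivity) ((one_le_div (by linarith)).2 hTN)
    _ = 2 * ℓ / T * ∫ s in 0..T, f s := by field_simp

end Energy

section Shortcut

variable {n : ℕ} {α β K m : ℝ} {L : EuclideanSpace ℝ (Fin n) → ℝ → EuclideanSpace ℝ (Fin n) → ℝ}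
  {T D B : ℝ}

open AdmissiblePath

lemma norm_sub_intVec_round_le (Y : EuclideanSpace ℝ (Fin n)) :
    ‖Y - intVec (fun i => round (Y i))‖ ≤ √n := by
  rw [EuclideanSpace.norm_eq]
  refine Real.sqrt_le_sqrt ?_
  calc ∑ i, ‖(Y - intVec (fun i => round (Y i))) i‖ ^ 2 ≤ ∑ _i : Fin n, (1 : ℝ) := by
        refine Finset.sum_le_sum fun i _ => ?_
        have h := abs_sub_round (Y i)
        rw [Real.norm_eq_abs, sq_abs]
        change (Y i - round (Y i)) ^ 2 ≤ 1
        nlinarith [abs_le.1 h]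
    _ = n := by simp

/- Replacing `γ` on `[q, q + 4]` by a segment of duration `1` frees three units of time, which the
tail absorbs through the integer time shift `-3`. -/
lemma exists_shortcut (hL : IsLagrangian n α β K m L) (hα : 0 ≤ α) (hβ : 0 ≤ β) (hm : 0 ≤ m)
    (γ : AdmissiblePath L 0 T) {q : ℝ} (hq : 0 ≤ q) (hqT : q + 4 ≤ T)
    (hD : ‖γ.curve (q + 4) - γ.curve q‖ ≤ D) :
    ∃ ζ : AdmissiblePath L 0 (T - 3), ζ.curve 0 = γ.curve 0 ∧ ζ.curve (T - 3) = γ.curve T ∧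
      ζ.cost ≤ γ.cost + 5 * K + β * D ^ m := by
  let γ₁ := γ.restrict le_rfl hq (by linarith)
  let γ₂ := γ.restrict hq (by linarith) hqT
  let γ₃ := γ.restrict (by linarith) hqT le_rfl
  let δ₂ : AdmissiblePath L q (q + 1) := line hL (by linarith) (γ.curve q) (γ.curve (q + 4))
  let δ₃ : AdmissiblePath L (q + 1) (T - 3) :=
    γ₃.translate hL (-3) 0 (by push_cast; ring) (by push_cast; ring)
  have hδ₃ : ∀ s, δ₃.curve s = γ.curve (s + 3) := fun s => by simp [δ₃, γ₃]
  have hsplit : γ₁.cost + (γ₂.cost + γ₃.cost) = γ.cost := by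
    have h₁ := γ.cost_restrict_add ⟨hq, by linarith⟩
    rw [← (γ.restrict hq (by linarith) le_rfl).cost_restrict_add ⟨by linarith, hqT⟩] at h₁
    exact h₁
  have h₁₂ : γ₁.curve q = δ₂.curve q := (line_curve_left hL _ _ _).symm
  have h₂₃ : δ₂.curve (q + 1) = δ₃.curve (q + 1) := by
    rw [hδ₃, add_assoc, show (1 : ℝ) + 3 = 4 by norm_num]
    exact line_curve_right hL _ _ _
  refine ⟨(γ₁.append δ₂ h₁₂).append δ₃ (by rwa [append_curve_right]), ?_, ?_, ?_⟩
  · rw [append_curve_left, append_curve_left]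
    rfl
  · rw [append_curve_right, hδ₃, sub_add_cancel]
  · rw [cost_append, cost_append, cost_translate, ← hsplit]
    have h₂ := γ₂.neg_mul_le_cost hL hα
    have hδ₂ := cost_line_le (D := D) (P := γ.curve q) (Q := γ.curve (q + 4)) hL hβ hm
      (lt_add_one q) (by simpa using hD)
    simp only [add_sub_cancel_left, one_mul] at h₂ hδ₂
    linarith

lemma exists_short_jump (hL : IsLagrangian n α β K m L) (hα : 0 < α) (hm : 1 ≤ m)
    (γ : AdmissiblePath L 0 T) (hT : 8 ≤ T) (hB : γ.cost + K * T ≤ B * T) :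
    ∃ q, 0 ≤ q ∧ q + 4 ≤ T ∧ ‖γ.curve (q + 4) - γ.curve q‖ ≤ 8 * (B / α) + 4 := by
  have hE := γ.intervalIntegrable_rpow_norm_vel hL hα
  obtain ⟨q, hq, hqT, hblock⟩ :=
    exists_integral_block_le hE (fun s _ => by positivity) four_pos (by linarith)
  have henergy := γ.mul_integral_rpow_norm_vel_le hL hα
  rw [sub_zero] at henergy
  have hjump := γ.admissibleOn.norm_sub_le hm ⟨hq, by linarith⟩ ⟨by linarith, hqT⟩ (by linarith)
    (hE.mono_Icc ⟨hq, by linarith⟩ ⟨by linarith, hqT⟩)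
  refine ⟨q, hq, hqT, hjump.trans ?_⟩
  have hT₀ : 0 < T := by linarith
  have htotal : ∫ s in 0..T, ‖γ.vel s‖ ^ m ≤ B / α * T := by
    rw [div_mul_eq_mul_div, le_div_iff₀ hα]
    linarith
  calc (∫ s in q..q + 4, ‖γ.vel s‖ ^ m) + (q + 4 - q)
      ≤ 2 * 4 / T * (B / α * T) + 4 := by
        rw [add_sub_cancel_left]
        gcongr
        exact hblock.trans (mul_le_mul_of_nonneg_left htotal (by positivity))
    _ = 8 * (B / α) + 4 := by field_simp; ring

end Shortcut

section Doubling

variable {n : ℕ} {α β K m : ℝ} {L : EuclideanSpace ℝ (Fin n) → ℝ → EuclideanSpace ℝ (Fin n) → ℝ}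
  {T M : ℝ} {Y : EuclideanSpace ℝ (Fin n)}

open AdmissiblePath

/- The copy of `ζ` starts at the integer time `⌊T⌋ + 2` from the lattice point nearest to `Y`; both
connecting segments have duration in `[1, 2]` and displacement at most `√n`. -/
lemma mCost_two_mul_le_cost_add_cost (hL : IsLagrangian n α β K m L) (hα : 0 ≤ α) (hβ : 0 ≤ β)
    (hK : 0 ≤ K) (hm : 0 ≤ m) (γ : AdmissiblePath L 0 T) (ζ : AdmissiblePath L 0 (T - 3))
    (hγ₀ : γ.curve 0 = 0) (hγT : γ.curve T = Y) (hζ₀ : ζ.curve 0 = 0) (hζT : ζ.curve (T - 3) = Y) :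
    mCost n L (2 * T) 0 ((2 : ℝ) • Y) ≤ γ.cost + ζ.cost + 4 * (β * √n ^ m + K) := by
  set w : Fin n → ℤ := fun i => round (Y i)
  have hfl := Int.floor_le T
  have hfl' := Int.lt_floor_add_one T
  set j : ℤ := ⌊T⌋ + 2 with hj
  have hj' : (j : ℝ) = ⌊T⌋ + 2 := by push_cast [hj]; rfl
  let δ₂ : AdmissiblePath L T j := line hL (by linarith) Y (intVec w)
  let δ₃ : AdmissiblePath L j (T - 3 + j) := ζ.translate hL j w (zero_add _) rfl
  let δ₄ : AdmissiblePath L (T - 3 + j) (2 * T) :=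
    line hL (by linarith) (Y + intVec w) ((2 : ℝ) • Y)
  have h₁₂ : γ.curve T = δ₂.curve T := hγT.trans (line_curve_left hL _ _ _).symm
  have h₂₃ : δ₂.curve j = δ₃.curve j := by
    rw [line_curve_right, translate_curve, sub_self, hζ₀, zero_add]
  have h₃₄ : δ₃.curve (T - 3 + j) = δ₄.curve (T - 3 + j) := by
    rw [line_curve_left, translate_curve, add_sub_cancel_right, hζT]
  have hδ₂ : δ₂.cost ≤ 2 * (β * √n ^ m + K) :=
    cost_line_le_two_mul hL hβ hK hm _ (by linarith) (by linarith) (by positivity)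
      (by rw [norm_sub_rev]; exact norm_sub_intVec_round_le Y)
  have hδ₄ : δ₄.cost ≤ 2 * (β * √n ^ m + K) :=
    cost_line_le_two_mul hL hβ hK hm _ (by linarith) (by linarith) (by positivity)
      (by rw [two_smul, add_sub_add_left_eq_sub]; exact norm_sub_intVec_round_le Y)
  let path := ((γ.append δ₂ h₁₂).append δ₃ (by rwa [append_curve_right])).append δ₄
    (by rwa [append_curve_right])
  calc mCost n L (2 * T) 0 ((2 : ℝ) • Y) ≤ path.cost :=
        mCost_le_cost hL hα path (by simp [path, hγ₀]) (by simp [path, δ₄])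
    _ = γ.cost + δ₂.cost + ζ.cost + δ₄.cost := by
        simp only [path, δ₃, cost_append, cost_translate]
    _ ≤ γ.cost + ζ.cost + 4 * (β * √n ^ m + K) := by linarith

/- Two connecting segments, plus the shortcut with the jump bound of `exists_short_jump` for
`B = β M^m + 2K + 1`. -/
def doublingConst (n : ℕ) (α β K m M : ℝ) : ℝ :=
  4 * (β * √n ^ m + K) + 5 * K + β * (8 * ((β * M ^ m + 2 * K + 1) / α) + 4) ^ m

theorem mCost_two_mul_le (hL : IsLagrangian n α β K m L) (hα : 0 < α) (hβ : 0 ≤ β) (hK : 0 ≤ K)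
    (hm : 1 ≤ m) (hT : 8 ≤ T) (hY : ‖Y‖ ≤ M * T) :
    mCost n L (2 * T) 0 ((2 : ℝ) • Y) ≤ 2 * mCost n L T 0 Y + doublingConst n α β K m M := by
  have hm₀ : 0 ≤ m := by linarith
  refine le_of_forall_pos_le_add fun δ hδ => ?_
  obtain ⟨γ, hγ₀, hγT, hγ⟩ :=
    exists_cost_lt_mCost_add (t := T) hL (by linarith) 0 Y (lt_min (half_pos hδ) one_pos)
  have hε := min_le_left (δ / 2) 1
  have hε₁ := min_le_right (δ / 2) 1
  have hmT := mCost_le_of_norm_sub_le (x := 0) (y := Y) hL hα.le hβ hm₀ (by linarith : 0 < T)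
    (by rwa [sub_zero])
  obtain ⟨q, hq, hqT, hjump⟩ := exists_short_jump (B := β * M ^ m + 2 * K + 1) hL hα hm γ hT
    (by nlinarith)
  obtain ⟨ζ, hζ₀, hζT, hζ⟩ := exists_shortcut hL hα.le hβ hm₀ γ hq hqT hjump
  have := mCost_two_mul_le_cost_add_cost hL hα.le hβ hK hm₀ γ ζ hγ₀ hγT (hζ₀.trans hγ₀)
    (hζT.trans hγT)
  unfold doublingConst
  linarith

end Doubling

section Rescaling

variable {n : ℕ} {α β K m : ℝ} {L : EuclideanSpace ℝ (Fin n) → ℝ → EuclideanSpace ℝ (Fin n) → ℝ}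
  {t M : ℝ} {y : EuclideanSpace ℝ (Fin n)}

lemma le_add_of_succ_le_add_div_two_pow {u : ℕ → ℝ} {c : ℝ} (hc : 0 ≤ c) {k₀ : ℕ}
    (h : ∀ k ≥ k₀, u (k + 1) ≤ u k + c / 2 ^ (k + 1)) : ∀ k ≥ k₀, u k ≤ u k₀ + c := by
  have key : ∀ k ≥ k₀, u k + c / 2 ^ k ≤ u k₀ + c / 2 ^ k₀ := by
    intro k hk
    induction k, hk using Nat.le_induction with
    | base => exact le_rfl
    | succ k hk ih =>
      have := h k hk
      have : c / 2 ^ (k + 1) + c / 2 ^ (k + 1) = c / 2 ^ k := by rw [pow_succ]; field_simp; ring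
      linarith
  intro k hk
  have h₁ : c / 2 ^ k₀ ≤ c := div_le_self hc (one_le_pow₀ one_le_two)
  have h₂ : 0 ≤ c / 2 ^ k := by positivity
  linarith [key k hk]

def rescaledCost (n : ℕ) (L : EuclideanSpace ℝ (Fin n) → ℝ → EuclideanSpace ℝ (Fin n) → ℝ)
    (t : ℝ) (y : EuclideanSpace ℝ (Fin n)) (k : ℕ) : ℝ :=
  ((2 : ℝ) ^ k)⁻¹ * mCost n L ((2 : ℝ) ^ k * t) 0 (((2 : ℝ) ^ k) • y)

lemma norm_two_pow_smul_le (hy : ‖y‖ ≤ M * t) (k : ℕ) :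
    ‖((2 : ℝ) ^ k) • y‖ ≤ M * ((2 : ℝ) ^ k * t) := by
  rw [norm_smul, Real.norm_of_nonneg (by positivity)]
  nlinarith [pow_pos (two_pos (α := ℝ)) k]

lemma neg_mul_le_rescaledCost (hL : IsLagrangian n α β K m L) (hα : 0 ≤ α) (ht : 0 < t)
    (k : ℕ) : -(K * t) ≤ rescaledCost n L t y k := by
  have h := neg_mul_le_mCost hL hα (by positivity : 0 < (2 : ℝ) ^ k * t) 0 ((2 : ℝ) ^ k • y)
  rw [rescaledCost, le_inv_mul_iff₀ (by positivity)]
  linarith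

lemma rescaledCost_succ_le (hL : IsLagrangian n α β K m L) (hα : 0 < α) (hβ : 0 ≤ β)
    (hK : 0 ≤ K) (hm : 1 ≤ m) (hy : ‖y‖ ≤ M * t) {k : ℕ} (hk : 8 ≤ 2 ^ k * t) :
    rescaledCost n L t y (k + 1) ≤
      rescaledCost n L t y k + doublingConst n α β K m M / 2 ^ (k + 1) := by
  have h := mCost_two_mul_le hL hα hβ hK hm hk (norm_two_pow_smul_le hy k)
  rw [← mul_assoc, ← pow_succ', smul_smul, ← pow_succ'] at h
  rw [rescaledCost, rescaledCost, inv_mul_le_iff₀ (by positivity)]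
  calc _ ≤ _ := h
    _ = _ := by field_simp; ring

lemma exists_rescaledCost_le (hL : IsLagrangian n α β K m L) (hα : 0 ≤ α) (hβ : 0 ≤ β)
    (hK : 0 ≤ K) (hm : 0 ≤ m) (hM : 0 ≤ M) (ht : 0 < t) (hy : ‖y‖ ≤ M * t) :
    ∃ k₀ : ℕ, (∀ k ≥ k₀, 8 ≤ 2 ^ k * t) ∧
      rescaledCost n L t y k₀ ≤ mCost n L t 0 y + 8 * (β * M ^ m + 2 * K) := by
  have hC : 0 ≤ β * M ^ m + 2 * K := by positivity
  obtain ⟨k₀, hk₀, hbase⟩ : ∃ k₀ : ℕ, 8 ≤ 2 ^ k₀ * t ∧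
      rescaledCost n L t y k₀ ≤ mCost n L t 0 y + 8 * (β * M ^ m + 2 * K) := by
    rcases le_or_gt 8 t with h8 | h8
    · exact ⟨0, by simpa using h8, by simp [rescaledCost]; positivity⟩
    obtain ⟨k₀, hk₀⟩ := pow_unbounded_of_one_lt (8 / t) one_lt_two
    refine ⟨k₀, ((div_lt_iff₀ ht).1 hk₀).le, ?_⟩
    have hup := mCost_le_of_norm_sub_le (t := 2 ^ k₀ * t) (x := 0) (y := (2 : ℝ) ^ k₀ • y)
      (D := M) hL hα hβ hm (by positivity) (by rw [sub_zero]; exact norm_two_pow_smul_le hy k₀)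
    have hlow := neg_mul_le_mCost hL hα ht 0 y
    have key : t * (β * M ^ m + K) ≤ mCost n L t 0 y + 8 * (β * M ^ m + 2 * K) := by nlinarith
    rw [rescaledCost, inv_mul_le_iff₀ (by positivity)]
    nlinarith [mul_le_mul_of_nonneg_left key (pow_pos (two_pos (α := ℝ)) k₀).le]
  exact ⟨k₀, fun k hk => hk₀.trans
    (mul_le_mul_of_nonneg_right (pow_le_pow_right₀ one_le_two hk) ht.le), hbase⟩

end Rescaling

theorem mCost_limsup_le_general (n : ℕ) (α β K m : ℝ)
    (hα : 0 < α) (hβ : 0 < β) (hK : 0 < K) (hm : 1 < m) (M : ℝ) (hM : 0 < M) :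
    ∃ C > 0,
      ∀ L : EuclideanSpace ℝ (Fin n) → ℝ → EuclideanSpace ℝ (Fin n) → ℝ,
        IsLagrangian n α β K m L →
        ∀ t : ℝ, 0 < t → ∀ y : EuclideanSpace ℝ (Fin n), ‖y‖ ≤ M * t →
          Filter.limsup
              (fun k : ℕ => ((2 : ℝ) ^ k)⁻¹ * mCost n L ((2 : ℝ) ^ k * t) 0 (((2 : ℝ) ^ k) • y))
              Filter.atTop ≤
            mCost n L t 0 y + C := by
  have hC₀ : 0 < doublingConst n α β K m M := by unfold doublingConst; positivity
  refine ⟨doublingConst n α β K m M + 8 * (β * M ^ m + 2 * K), by positivity, ?_⟩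
  intro L hL t ht y hy
  obtain ⟨k₀, hk₀, hbase⟩ :=
    exists_rescaledCost_le hL hα.le hβ.le hK.le (by linarith) hM.le ht hy
  have hbound := le_add_of_succ_le_add_div_two_pow hC₀.le fun k hk =>
    rescaledCost_succ_le hL hα hβ.le hK.le hm.le hy (hk₀ k hk)
  refine limsup_le_of_le (isBoundedUnder_of ⟨-(K * t), fun k =>
    neg_mul_le_rescaledCost hL hα.le ht k⟩).isCoboundedUnder_le
    (eventually_atTop.2 ⟨k₀, fun k hk => ?_⟩)
  change rescaledCost n L t y k ≤ _
  linarith [hbound k hk]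

/-- Dyadic limsup bound: for every `M > 0` there is `C > 0` depending only on
`K, M, n, α, β, m` such that for all `t > 0` and `|y| ≤ M t`,
`limsup_(k → ∞) 2⁻ᵏ m(2ᵏ t, 0, 2ᵏ y) ≤ m(t, 0, y) + C`. -/
theorem mCost_limsup_le (n : ℕ) (hn : 1 ≤ n) (α β K m : ℝ)
    (hα : 0 < α) (hβ : 0 < β) (hK : 0 < K) (hm : 1 < m) (M : ℝ) (hM : 0 < M) :
    ∃ C > 0,
      ∀ L : EuclideanSpace ℝ (Fin n) → ℝ → EuclideanSpace ℝ (Fin n) → ℝ,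
        IsLagrangian n α β K m L →
        ∀ t : ℝ, 0 < t → ∀ y : EuclideanSpace ℝ (Fin n), ‖y‖ ≤ M * t →
          Filter.limsup
              (fun k : ℕ => ((2 : ℝ) ^ k)⁻¹ * mCost n L ((2 : ℝ) ^ k * t) 0 (((2 : ℝ) ^ k) • y))
              Filter.atTop ≤
            mCost n L t 0 y + C :=
  mCost_limsup_le_general n α β K m hα hβ hK hm M hM

end
end

section
/- Fix M > 0. There exists a constant C > 0, depending only on K, M, n, α, β and m, with the following property. Let t > 4(n+4)², let y ∈ ℝⁿ with |y| ≤ Mt, and let η : [0,2t] → ℝⁿ be absolutely continuous with η(0) = 0, η(2t) = 2y and ∫₀^{2t} L(η(s), s, η̇(s)) ds ≤ m(2t, 0, 2y) + 1. Suppose [a₁,b₁], …, [aₖ,bₖ] are pairwise disjoint closed subintervals of [0,2t] with k ≤ (n+2)/2, ∑_{i=1}^{k} (η(bᵢ) − η(aᵢ)) = y and ∑_{i=1}^{k} (bᵢ − aᵢ) = t. Then m(t, 0, y) ≤ ∑_{i=1}^{k} ∫_{aᵢ}^{bᵢ} L(η(s), s, η̇(s)) ds + C. -/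
open MeasureTheory Filter

noncomputable section

/-!
Cut out of the longest piece a window of length `2k + 3` carrying an `O(1)` share of
`∫ ‖η'‖ ^ m`: near-minimality and the growth bounds make `∫₀^{2t} ‖η'‖ ^ m = O(t)`, and the
longest piece has length at least `t / k`, so one of its `≈ t / (2k + 3)` consecutive windows is
cheap. The displacement across this window is then `O(1)`, because `‖v‖ ≤ ‖v‖ ^ m + 1`.

The remaining `k + 1` pieces have total duration `t - (2k + 3)`. Lay them out one after the
other, each shifted by an integer time so that it starts between one and two time units after the
previous one ends, and by an integer vector so that it starts within `√n` of where the previous one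
ended; by periodicity the shifted pieces cost what the originals cost, and the straight connectors
cost `O(1)` each. The chain ends at a time in `[t - k - 2, t - 1]` and at a point `O(1)` away from
`y`, and a last straight segment, of duration at least one, reaches `(t, y)`.
-/

section IntervalPiecewise

variable {E : Type*} [NormedAddCommGroup E] {μ : Measure ℝ} {f g : ℝ → E} {u v w : ℝ}

theorem IntervalIntegrable.mono_interval {a b c d : ℝ} (hf : IntervalIntegrable f μ a b)
    (hac : a ≤ c) (hcd : c ≤ d) (hdb : d ≤ b) : IntervalIntegrable f μ c d :=
  hf.mono_set (Set.uIcc_subset_uIcc (Set.Icc_subset_uIcc ⟨hac, hcd.trans hdb⟩)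
    (Set.Icc_subset_uIcc ⟨hac.trans hcd, hdb⟩))

theorem IntervalIntegrable.ite_le (hf : IntervalIntegrable f μ u v)
    (hg : IntervalIntegrable g μ v w) (huv : u ≤ v) (hvw : v ≤ w) :
    IntervalIntegrable (fun s => if s ≤ v then f s else g s) μ u w := by
  refine (hf.congr fun s hs => ?_).trans (hg.congr fun s hs => ?_)
  · rw [Set.uIoc_of_le huv] at hs
    simp [hs.2]
  · rw [Set.uIoc_of_le hvw] at hs
    simp [not_le.2 hs.1]

theorem intervalIntegral.integral_ite_le [NormedSpace ℝ E] (hf : IntervalIntegrable f μ u v)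
    (hg : IntervalIntegrable g μ v w) (huv : u ≤ v) (hvw : v ≤ w) :
    ∫ s in u..w, (if s ≤ v then f s else g s) ∂μ = (∫ s in u..v, f s ∂μ) + ∫ s in v..w, g s ∂μ := by
  have hfg := hf.ite_le hg huv hvw
  rw [← integral_add_adjacent_intervals (hfg.mono_interval le_rfl huv hvw)
    (hfg.mono_interval huv hvw le_rfl)]
  congr 1 <;> refine integral_congr_ae (Eventually.of_forall fun s hs => ?_)
  · rw [Set.uIoc_of_le huv] at hs
    simp [hs.2]
  · rw [Set.uIoc_of_le hvw] at hs
    simp [not_le.2 hs.1]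

end IntervalPiecewise

theorem intervalIntegral.integral_mono_interval_of_nonneg {g : ℝ → ℝ} {a b a' b' : ℝ}
    (hg₀ : ∀ s ∈ Set.Icc a b, 0 ≤ g s) (hg : IntervalIntegrable g volume a b) (ha : a ≤ a')
    (hab : a' ≤ b') (hb : b' ≤ b) : ∫ s in a'..b', g s ≤ ∫ s in a..b, g s :=
  integral_mono_interval ha hab hb ((ae_restrict_iff' measurableSet_Ioc).2
    (Eventually.of_forall fun s hs => hg₀ s (Set.Ioc_subset_Icc_self hs))) hg

namespace AdmissibleOn

variable {n : ℕ} {a b : ℝ} {η η' : ℝ → EuclideanSpace ℝ (Fin n)}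

theorem eq_add_integral (h : AdmissibleOn n a b η η') {u v : ℝ} (hu : u ∈ Set.Icc a b)
    (hv : v ∈ Set.Icc a b) : η v = η u + ∫ s in u..v, η' s := by
  rw [h.2 u hu, h.2 v hv, ← intervalIntegral.integral_add_adjacent_intervals
    (h.1.mono_interval le_rfl hu.1 hu.2)
    ((h.1.mono_interval le_rfl hu.1 hu.2).symm.trans (h.1.mono_interval le_rfl hv.1 hv.2))]
  abel

theorem mono_s14 (h : AdmissibleOn n a b η η') {a' b' : ℝ} (ha : a ≤ a') (hab : a' ≤ b')
    (hb : b' ≤ b) : AdmissibleOn n a' b' η η' :=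
  ⟨h.1.mono_interval ha hab hb,
    fun _ hs => h.eq_add_integral ⟨ha, hab.trans hb⟩ ⟨ha.trans hs.1, hs.2.trans hb⟩⟩

theorem const (a b : ℝ) (P : EuclideanSpace ℝ (Fin n)) :
    AdmissibleOn n a b (fun _ => P) (fun _ => 0) :=
  ⟨intervalIntegrable_const, fun _ _ => by simp⟩

theorem segment (u v : ℝ) (P Q : EuclideanSpace ℝ (Fin n)) :
    AdmissibleOn n u v (fun s => P + ((s - u) / (v - u)) • (Q - P))
      (fun _ => (v - u)⁻¹ • (Q - P)) := by
  refine ⟨intervalIntegrable_const, fun s _ => ?_⟩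
  simp only [sub_self, zero_mul, zero_smul, add_zero, intervalIntegral.integral_const, smul_smul,
    div_eq_mul_inv]

theorem comp_add_right (h : AdmissibleOn n a b η η') (τ : ℝ) (z : EuclideanSpace ℝ (Fin n)) :
    AdmissibleOn n (a - τ) (b - τ) (fun s => η (s + τ) + z) (fun s => η' (s + τ)) := by
  refine ⟨h.1.comp_add_right τ, fun s hs => ?_⟩
  dsimp only
  rw [intervalIntegral.integral_comp_add_right, sub_add_cancel,
    h.2 (s + τ) ⟨by linarith [hs.1], by linarith [hs.2]⟩]
  abel

theorem ite_le {u v w : ℝ} {ξ₁ ξ₁' ξ₂ ξ₂' : ℝ → EuclideanSpace ℝ (Fin n)}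
    (h₁ : AdmissibleOn n u v ξ₁ ξ₁') (h₂ : AdmissibleOn n v w ξ₂ ξ₂') (huv : u ≤ v)
    (hvw : v ≤ w) (hv : ξ₁ v = ξ₂ v) :
    AdmissibleOn n u w (fun s => if s ≤ v then ξ₁ s else ξ₂ s)
      (fun s => if s ≤ v then ξ₁' s else ξ₂' s) := by
  refine ⟨h₁.1.ite_le h₂.1 huv hvw, fun s hs => ?_⟩
  simp only [if_pos huv]
  rcases le_or_gt s v with hsv | hvs
  · rw [if_pos hsv, h₁.2 s ⟨hs.1, hsv⟩]
    congr 1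
    refine intervalIntegral.integral_congr_ae (Eventually.of_forall fun r hr => ?_)
    rw [Set.uIoc_of_le hs.1] at hr
    simp [hr.2.trans hsv]
  · rw [if_neg (not_le.2 hvs), intervalIntegral.integral_ite_le h₁.1
      (h₂.1.mono_interval le_rfl hvs.le hs.2) huv hvs.le, h₂.2 s ⟨hvs.le, hs.2⟩, ← hv,
      h₁.2 v ⟨huv, le_rfl⟩, add_assoc]

theorem norm_sub_le_integral_rpow_add {m : ℝ} (h : AdmissibleOn n a b η η') (hab : a ≤ b)
    (hm : 1 ≤ m) (hg : IntervalIntegrable (fun s => ‖η' s‖ ^ m) volume a b) :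
    ‖η b - η a‖ ≤ (∫ s in a..b, ‖η' s‖ ^ m) + (b - a) := by
  rw [h.2 b ⟨hab, le_rfl⟩, add_sub_cancel_left]
  calc ‖∫ s in a..b, η' s‖ ≤ ∫ s in a..b, ‖η' s‖ :=
        intervalIntegral.norm_integral_le_integral_norm hab
    _ ≤ ∫ s in a..b, (‖η' s‖ ^ m + 1) :=
        intervalIntegral.integral_mono_on hab h.1.norm (hg.add intervalIntegrable_const)
          fun s _ => ?_
    _ = _ := by
        rw [intervalIntegral.integral_add hg intervalIntegrable_const,
          intervalIntegral.integral_const, smul_eq_mul, mul_one]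
  rcases le_or_gt ‖η' s‖ 1 with hs | hs
  · linarith [Real.rpow_nonneg (norm_nonneg (η' s)) m]
  · linarith [Real.self_le_rpow_of_one_le hs.le hm]

end AdmissibleOn

theorem exists_norm_add_intCast_sub_le {n : ℕ} (x P : EuclideanSpace ℝ (Fin n)) :
    ∃ w : Fin n → ℤ, ‖x + WithLp.toLp 2 (fun i => (w i : ℝ)) - P‖ ≤ √n := by
  refine ⟨fun i => ⌊P i - x i⌋, ?_⟩
  rw [EuclideanSpace.norm_eq]
  refine Real.sqrt_le_sqrt ?_
  calc _ ≤ ∑ _i : Fin n, (1 : ℝ) := Finset.sum_le_sum fun i _ => ?_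
    _ = n := by simp
  have hi : (x + WithLp.toLp 2 (fun i => (⌊P i - x i⌋ : ℝ)) - P) i = -Int.fract (P i - x i) := by
    simp only [PiLp.sub_apply, PiLp.add_apply, ← Int.self_sub_floor]; ring
  rw [hi, norm_neg, Real.norm_of_nonneg (Int.fract_nonneg _)]
  exact pow_le_one₀ (Int.fract_nonneg _) (Int.fract_lt_one _).le

namespace IsLagrangian

variable {n : ℕ} {α β K m a b : ℝ} {L : EuclideanSpace ℝ (Fin n) → ℝ → EuclideanSpace ℝ (Fin n) → ℝ}
  {η η' : ℝ → EuclideanSpace ℝ (Fin n)}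

theorem neg_le_s14 (hL : IsLagrangian n α β K m L) (hα : 0 ≤ α) (x : EuclideanSpace ℝ (Fin n)) (s : ℝ)
    (v : EuclideanSpace ℝ (Fin n)) : -K ≤ L x s v := by
  have := hL.lower_bound x s v
  have := Real.rpow_nonneg (norm_nonneg v) m
  nlinarith

theorem add_intCast (hL : IsLagrangian n α β K m L) (x v : EuclideanSpace ℝ (Fin n)) (s : ℝ)
    (w : Fin n → ℤ) (j : ℤ) : L (x + WithLp.toLp 2 (fun i => (w i : ℝ))) s v = L x (s + j) v := by
  have h := hL.periodic x v (s + j) w (-j)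
  rwa [Int.cast_neg, add_neg_cancel_right] at h

theorem norm_rpow_le (hL : IsLagrangian n α β K m L) (hα : 0 < α) (x : EuclideanSpace ℝ (Fin n))
    (s : ℝ) (v : EuclideanSpace ℝ (Fin n)) : ‖v‖ ^ m ≤ (L x s v + K) / α := by
  rw [le_div_iff₀' hα]
  linarith [hL.lower_bound x s v]

theorem intervalIntegrable_norm_rpow (hL : IsLagrangian n α β K m L) (hα : 0 < α)
    (hη : AdmissibleOn n a b η η')
    (hint : IntervalIntegrable (fun s => L (η s) s (η' s)) volume a b) :
    IntervalIntegrable (fun s => ‖η' s‖ ^ m) volume a b :=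
  ((hint.add intervalIntegrable_const).div_const α).mono_fun'
    ((intervalIntegrable_iff.1 hη.1).aestronglyMeasurable.norm.aemeasurable.pow_const
      m).aestronglyMeasurable
    (Eventually.of_forall fun s => by
      show ‖‖η' s‖ ^ m‖ ≤ (L (η s) s (η' s) + K) / α
      rw [Real.norm_of_nonneg (Real.rpow_nonneg (norm_nonneg _) m)]
      exact hL.norm_rpow_le hα _ _ _)

theorem integral_norm_rpow_le (hL : IsLagrangian n α β K m L) (hα : 0 < α)
    (hη : AdmissibleOn n a b η η')
    (hint : IntervalIntegrable (fun s => L (η s) s (η' s)) volume a b) (hab : a ≤ b) :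
    ∫ s in a..b, ‖η' s‖ ^ m ≤ ((∫ s in a..b, L (η s) s (η' s)) + K * (b - a)) / α := by
  calc _ ≤ ∫ s in a..b, (L (η s) s (η' s) + K) / α :=
        intervalIntegral.integral_mono_on hab (hL.intervalIntegrable_norm_rpow hα hη hint)
          ((hint.add intervalIntegrable_const).div_const α) fun s _ => hL.norm_rpow_le hα _ _ _
    _ = _ := by
        rw [intervalIntegral.integral_div,
          intervalIntegral.integral_add hint intervalIntegrable_const,
          intervalIntegral.integral_const, smul_eq_mul, mul_comm K]

end IsLagrangian

def Joinable {n : ℕ} (L : EuclideanSpace ℝ (Fin n) → ℝ → EuclideanSpace ℝ (Fin n) → ℝ)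
    (u v : ℝ) (P Q : EuclideanSpace ℝ (Fin n)) (c : ℝ) : Prop :=
  ∃ ξ ξ' : ℝ → EuclideanSpace ℝ (Fin n), AdmissibleOn n u v ξ ξ' ∧ ξ u = P ∧ ξ v = Q ∧
    IntervalIntegrable (fun s => L (ξ s) s (ξ' s)) volume u v ∧
    ∫ s in u..v, L (ξ s) s (ξ' s) ≤ c

namespace Joinable

variable {n : ℕ} {L : EuclideanSpace ℝ (Fin n) → ℝ → EuclideanSpace ℝ (Fin n) → ℝ}
  {u v w c c₁ c₂ : ℝ} {P Q R : EuclideanSpace ℝ (Fin n)}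

theorem mono_s14 (h : Joinable L u v P Q c₁) (hc : c₁ ≤ c₂) : Joinable L u v P Q c₂ :=
  let ⟨ξ, ξ', hξ, hu, hv, hint, hcost⟩ := h
  ⟨ξ, ξ', hξ, hu, hv, hint, hcost.trans hc⟩

theorem refl (u : ℝ) (P : EuclideanSpace ℝ (Fin n)) : Joinable L u u P P 0 :=
  ⟨_, _, AdmissibleOn.const u u P, rfl, rfl, .refl, by simp⟩

theorem trans (h₁ : Joinable L u v P Q c₁) (h₂ : Joinable L v w Q R c₂) (huv : u ≤ v)
    (hvw : v ≤ w) : Joinable L u w P R (c₁ + c₂) := by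
  obtain ⟨ξ₁, ξ₁', hξ₁, hu, hv₁, hint₁, hcost₁⟩ := h₁
  obtain ⟨ξ₂, ξ₂', hξ₂, hv₂, hw, hint₂, hcost₂⟩ := h₂
  have hcost : (fun s => L (if s ≤ v then ξ₁ s else ξ₂ s) s (if s ≤ v then ξ₁' s else ξ₂' s)) =
      fun s => if s ≤ v then L (ξ₁ s) s (ξ₁' s) else L (ξ₂ s) s (ξ₂' s) := by
    ext s; split_ifs <;> rfl
  refine ⟨_, _, hξ₁.ite_le hξ₂ huv hvw (hv₁.trans hv₂.symm), by simp [huv, hu], ?_, ?_, ?_⟩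
  · rcases hvw.eq_or_lt with rfl | hvw
    · simp [hv₁, ← hv₂, hw]
    · simp [not_le.2 hvw, hw]
  · rw [hcost]; exact hint₁.ite_le hint₂ huv hvw
  · rw [hcost, intervalIntegral.integral_ite_le hint₁ hint₂ huv hvw]
    exact add_le_add hcost₁ hcost₂

theorem mCost_le {t B : ℝ} {x y : EuclideanSpace ℝ (Fin n)} (h : Joinable L 0 t x y c)
    (hB : ∀ x s v, B ≤ L x s v) (ht : 0 ≤ t) : mCost n L t x y ≤ c := by
  obtain ⟨ξ, ξ', hξ, h0, ht', hint, hcost⟩ := h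
  refine le_trans (csInf_le ⟨B * t, ?_⟩ ⟨ξ, ξ', hξ, h0, ht', hint, rfl⟩) hcost
  rintro _ ⟨ζ, ζ', -, -, -, hint', rfl⟩
  simpa [mul_comm] using intervalIntegral.integral_mono_on ht intervalIntegrable_const hint'
    fun s _ => hB (ζ s) s (ζ' s)

end Joinable

section Competitors

variable {n : ℕ} {α β K m : ℝ} {L : EuclideanSpace ℝ (Fin n) → ℝ → EuclideanSpace ℝ (Fin n) → ℝ}

theorem joinable_segment (hL : IsLagrangian n α β K m L) {u v : ℝ} (huv : u < v)
    (P Q : EuclideanSpace ℝ (Fin n)) :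
    Joinable L u v P Q ((β * (‖Q - P‖ / (v - u)) ^ m + K) * (v - u)) := by
  have hvu : 0 < v - u := sub_pos.2 huv
  have hcont : Continuous fun s => L (P + ((s - u) / (v - u)) • (Q - P)) s ((v - u)⁻¹ • (Q - P)) :=
    hL.cont.comp (f := fun s => (P + ((s - u) / (v - u)) • (Q - P), s, (v - u)⁻¹ • (Q - P)))
      (by fun_prop)
  refine ⟨_, _, AdmissibleOn.segment u v P Q, by simp, by simp [div_self hvu.ne'],
    hcont.intervalIntegrable _ _, ?_⟩
  have hspeed : ‖(v - u)⁻¹ • (Q - P)‖ = ‖Q - P‖ / (v - u) := by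
    rw [norm_smul, norm_inv, Real.norm_of_nonneg hvu.le, inv_mul_eq_div]
  calc _ ≤ ∫ _ in u..v, β * (‖Q - P‖ / (v - u)) ^ m + K :=
        intervalIntegral.integral_mono_on huv.le (hcont.intervalIntegrable _ _)
          intervalIntegrable_const fun s _ => hspeed ▸ hL.upper_bound _ _ _
    _ = _ := by rw [intervalIntegral.integral_const, smul_eq_mul, mul_comm]

theorem mCost_le_segment (hL : IsLagrangian n α β K m L) (hα : 0 ≤ α) {t : ℝ} (ht : 0 < t)
    (x y : EuclideanSpace ℝ (Fin n)) : mCost n L t x y ≤ (β * (‖y - x‖ / t) ^ m + K) * t := by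
  simpa using (joinable_segment hL ht x y).mCost_le (hL.neg_le_s14 hα) ht.le

theorem joinable_shift (hL : IsLagrangian n α β K m L) {a b : ℝ}
    {η η' : ℝ → EuclideanSpace ℝ (Fin n)} (hη : AdmissibleOn n a b η η')
    (hint : IntervalIntegrable (fun s => L (η s) s (η' s)) volume a b) (τ : ℤ) (w : Fin n → ℤ) :
    Joinable L (a - τ) (b - τ) (η a + WithLp.toLp 2 (fun i => (w i : ℝ)))
      (η b + WithLp.toLp 2 (fun i => (w i : ℝ))) (∫ s in a..b, L (η s) s (η' s)) := by
  have hcost : (fun s => L (η (s + τ) + WithLp.toLp 2 (fun i => (w i : ℝ))) s (η' (s + τ))) =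
      fun s => L (η (s + τ)) (s + τ) (η' (s + τ)) := by
    ext s; exact hL.add_intCast _ _ _ w τ
  refine ⟨_, _, hη.comp_add_right τ (WithLp.toLp 2 (fun i => (w i : ℝ))), by simp, by simp, ?_, ?_⟩
  · rw [hcost]; exact hint.comp_add_right (f := fun s => L (η s) s (η' s)) τ
  · rw [hcost, intervalIntegral.integral_comp_add_right (fun s => L (η s) s (η' s)), sub_add_cancel,
      sub_add_cancel]

theorem exists_joinable_shifted_piece (hL : IsLagrangian n α β K m L) (hβ : 0 ≤ β) (hK : 0 ≤ K)
    (hm : 0 ≤ m) {a b : ℝ} {η η' : ℝ → EuclideanSpace ℝ (Fin n)} (hη : AdmissibleOn n a b η η')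
    (hint : IntervalIntegrable (fun s => L (η s) s (η' s)) volume a b) (hab : a ≤ b) (S₀ : ℝ)
    (P₀ : EuclideanSpace ℝ (Fin n)) :
    ∃ S z, S₀ + (b - a) + 1 ≤ S ∧ S ≤ S₀ + (b - a) + 2 ∧ ‖z‖ ≤ √n ∧
      Joinable L S₀ S P₀ (P₀ + (η b - η a) + z)
        ((∫ s in a..b, L (η s) s (η' s)) + 2 * (β * √n ^ m + K)) := by
  obtain ⟨w, hw⟩ := exists_norm_add_intCast_sub_le (η a) P₀
  -- the connector from `(S₀, P₀)` to the shifted piece lasts between 1 and 2, so its speed is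
  -- at most `√n`
  set τ : ℤ := ⌊a - S₀⌋ - 1
  have hd : a - τ - S₀ = 1 + Int.fract (a - S₀) := by
    simp only [τ, ← Int.self_sub_floor]; push_cast; ring
  have hd₁ : 1 ≤ a - τ - S₀ := by linarith [Int.fract_nonneg (a - S₀)]
  have hd₂ : a - τ - S₀ ≤ 2 := by linarith [Int.fract_lt_one (a - S₀)]
  refine ⟨b - τ, η a + WithLp.toLp 2 (fun i => (w i : ℝ)) - P₀, by linarith, by linarith, hw, ?_⟩
  have hconn := joinable_segment hL (show S₀ < a - τ by linarith) P₀
    (η a + WithLp.toLp 2 (fun i => (w i : ℝ)))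
  convert (hconn.trans (joinable_shift hL hη hint τ w) (by linarith) (by linarith)).mono_s14 ?_
    using 1
  · abel
  · have hK' : 0 ≤ β * √n ^ m + K := by positivity
    calc _ ≤ (β * √n ^ m + K) * (a - τ - S₀) + ∫ s in a..b, L (η s) s (η' s) := by
          gcongr
          exact (div_le_self (norm_nonneg _) hd₁).trans hw
      _ ≤ _ := by nlinarith

theorem exists_joinable_of_pieces (hL : IsLagrangian n α β K m L) (hβ : 0 ≤ β) (hK : 0 ≤ K)
    (hm : 0 ≤ m) {η η' : ℝ → EuclideanSpace ℝ (Fin n)} (pcs : List (ℝ × ℝ))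
    (hpcs : ∀ p ∈ pcs, p.1 ≤ p.2 ∧ AdmissibleOn n p.1 p.2 η η' ∧
      IntervalIntegrable (fun s => L (η s) s (η' s)) volume p.1 p.2)
    (S₀ : ℝ) (P₀ : EuclideanSpace ℝ (Fin n)) :
    ∃ S₁ P₁, S₀ ≤ S₁ ∧ S₀ + (pcs.map fun p => p.2 - p.1).sum + pcs.length ≤ S₁ ∧
      S₁ ≤ S₀ + (pcs.map fun p => p.2 - p.1).sum + 2 * pcs.length ∧
      ‖P₁ - (P₀ + (pcs.map fun p => η p.2 - η p.1).sum)‖ ≤ pcs.length * √n ∧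
      Joinable L S₀ S₁ P₀ P₁ ((pcs.map fun p => ∫ s in p.1..p.2, L (η s) s (η' s)).sum +
        pcs.length * (2 * (β * √n ^ m + K))) := by
  induction pcs generalizing S₀ P₀ with
  | nil => exact ⟨S₀, P₀, le_rfl, by simp, by simp, by simp, by simpa using Joinable.refl S₀ P₀⟩
  | cons p pcs ih =>
    obtain ⟨hp, hη, hint⟩ := hpcs p List.mem_cons_self
    obtain ⟨S, z, hS₁, hS₂, hz, hjoin⟩ :=
      exists_joinable_shifted_piece hL hβ hK hm hη hint hp S₀ P₀
    obtain ⟨S₁, P₁, hSS₁, hS₁₁, hS₁₂, hP₁, hjoin'⟩ :=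
      ih (fun q hq => hpcs q (List.mem_cons_of_mem p hq)) S (P₀ + (η p.2 - η p.1) + z)
    refine ⟨S₁, P₁, by linarith, ?_, ?_, ?_, ?_⟩
    · simp only [List.map_cons, List.sum_cons, List.length_cons]; push_cast; linarith
    · simp only [List.map_cons, List.sum_cons, List.length_cons]; push_cast; linarith
    · simp only [List.map_cons, List.sum_cons, List.length_cons]; push_cast
      calc _ = ‖(P₁ - (P₀ + (η p.2 - η p.1) + z + (pcs.map fun p => η p.2 - η p.1).sum)) + z‖ := by
            congr 1; abel
        _ ≤ _ := (norm_add_le _ _).trans (by linarith)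
    · refine (hjoin.trans hjoin' (by linarith) hSS₁).mono_s14 (le_of_eq ?_)
      simp only [List.map_cons, List.sum_cons, List.length_cons]; push_cast; ring

theorem mCost_le_of_pieces (hL : IsLagrangian n α β K m L) (hα : 0 ≤ α) (hβ : 0 ≤ β) (hK : 0 ≤ K)
    (hm : 0 ≤ m) {η η' : ℝ → EuclideanSpace ℝ (Fin n)} (pcs : List (ℝ × ℝ))
    (hpcs : ∀ p ∈ pcs, p.1 ≤ p.2 ∧ AdmissibleOn n p.1 p.2 η η' ∧
      IntervalIntegrable (fun s => L (η s) s (η' s)) volume p.1 p.2)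
    {t : ℝ} (ht : (pcs.map fun p => p.2 - p.1).sum + 2 * pcs.length + 1 ≤ t)
    (y : EuclideanSpace ℝ (Fin n)) :
    mCost n L t 0 y ≤ (pcs.map fun p => ∫ s in p.1..p.2, L (η s) s (η' s)).sum +
      pcs.length * (2 * (β * √n ^ m + K)) +
      (β * (pcs.length * √n + ‖y - (pcs.map fun p => η p.2 - η p.1).sum‖) ^ m + K) *
        (t - (pcs.map fun p => p.2 - p.1).sum - pcs.length) := by
  obtain ⟨S₁, P₁, hS₁, hS₁₁, hS₁₂, hP₁, hjoin⟩ :=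
    exists_joinable_of_pieces hL hβ hK hm pcs hpcs 0 0
  rw [zero_add] at hP₁
  have hfinal := joinable_segment hL (show S₁ < t by linarith) P₁ y
  refine ((hjoin.trans hfinal hS₁ (by linarith)).mCost_le (hL.neg_le_s14 hα) (by linarith)).trans ?_
  have hspeed : ‖y - P₁‖ / (t - S₁) ≤
      pcs.length * √n + ‖y - (pcs.map fun p => η p.2 - η p.1).sum‖ :=
    calc ‖y - P₁‖ / (t - S₁) ≤ ‖y - P₁‖ := div_le_self (norm_nonneg _) (by linarith)
      _ = ‖(P₁ - (pcs.map fun p => η p.2 - η p.1).sum) -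
            (y - (pcs.map fun p => η p.2 - η p.1).sum)‖ := by
          rw [← norm_neg]; congr 1; abel
      _ ≤ _ := (norm_sub_le _ _).trans (by linarith)
  have hS₁t : 0 ≤ t - S₁ := by linarith
  gcongr _ + (β * ?_ ^ m + K) * ?_
  linarith

end Competitors

def cutWindow {k : ℕ} (a b : Fin k → ℝ) (i₀ : Fin k) (c τ : ℝ) : List (ℝ × ℝ) :=
  List.ofFn (Function.update (fun i => (a i, b i)) i₀ (a i₀, c)) ++ [(c + τ, b i₀)]

theorem length_cutWindow {k : ℕ} (a b : Fin k → ℝ) (i₀ : Fin k) (c τ : ℝ) :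
    (cutWindow a b i₀ c τ).length = k + 1 := by
  simp [cutWindow]

theorem sum_map_cutWindow {G : Type*} [AddCommGroup G] {k : ℕ} (F : ℝ × ℝ → G)
    (a b : Fin k → ℝ) (i₀ : Fin k) (c τ : ℝ) :
    ((cutWindow a b i₀ c τ).map F).sum =
      ∑ i, F (a i, b i) + (F (a i₀, c) + F (c + τ, b i₀) - F (a i₀, b i₀)) := by
  classical
  rw [cutWindow, List.map_append, List.map_ofFn, List.sum_append, List.sum_ofFn,
    Function.comp_update, Finset.sum_update_of_mem (Finset.mem_univ i₀),
    Finset.sum_eq_add_sum_sdiff_singleton_of_mem (Finset.mem_univ i₀) (fun i => F (a i, b i))]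
  simp only [List.map_cons, List.map_nil, List.sum_cons, List.sum_nil, Function.comp_apply]
  abel

theorem le_of_mem_cutWindow {k : ℕ} {T c τ : ℝ} {a b : Fin k → ℝ}
    (hab : ∀ i, 0 ≤ a i ∧ a i ≤ b i ∧ b i ≤ T) {i₀ : Fin k} (hac : a i₀ ≤ c)
    (hcb : c + τ ≤ b i₀) (hτ : 0 ≤ τ) :
    ∀ p ∈ cutWindow a b i₀ c τ, 0 ≤ p.1 ∧ p.1 ≤ p.2 ∧ p.2 ≤ T := by
  obtain ⟨ha₀, -, hbT⟩ := hab i₀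
  intro p hp
  simp only [cutWindow, List.mem_append, List.mem_ofFn, List.mem_singleton] at hp
  rcases hp with ⟨i, rfl⟩ | rfl
  · rcases eq_or_ne i i₀ with rfl | hi
    · simp only [Function.update_self]
      exact ⟨ha₀, hac, by linarith⟩
    · simpa [Function.update_of_ne hi] using hab i
  · exact ⟨by linarith, by linarith, hbT⟩

section Window

variable {g : ℝ → ℝ} {a b τ : ℝ}

theorem exists_integral_window_le {N : ℕ} (hτ : 0 ≤ τ) (hN : 0 < N)
    (hg : IntervalIntegrable g volume a (a + N * τ)) :
    ∃ c, a ≤ c ∧ c + τ ≤ a + N * τ ∧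
      ∫ s in c..c + τ, g s ≤ (∫ s in a..a + N * τ, g s) / N := by
  have hmem : ∀ j ≤ N, a + j * τ ∈ Set.uIcc a (a + N * τ) := fun j hj => by
    rw [Set.uIcc_of_le (le_add_of_nonneg_right (by positivity))]
    exact ⟨le_add_of_nonneg_right (by positivity), by gcongr⟩
  have hsum := intervalIntegral.sum_integral_adjacent_intervals (a := fun j : ℕ => a + j * τ)
    fun j hj => hg.mono_set (Set.uIcc_subset_uIcc (hmem j hj.le) (hmem (j + 1) hj))
  obtain ⟨j, hj, hle⟩ := Finset.exists_le_of_sum_le (Finset.nonempty_range_iff.2 hN.ne')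
    (f := fun j : ℕ => ∫ s in (a + j * τ)..(a + ((j + 1 : ℕ) : ℝ) * τ), g s)
    (g := fun _ => (∫ s in a..a + N * τ, g s) / N) (by
      rw [hsum, Finset.sum_const, Finset.card_range, nsmul_eq_mul,
        mul_div_cancel₀ _ (by positivity)]
      simp)
  have hj' : (j : ℝ) + 1 ≤ N := by exact_mod_cast Finset.mem_range.1 hj
  refine ⟨a + j * τ, le_add_of_nonneg_right (by positivity), by nlinarith, ?_⟩
  simpa [add_mul, add_assoc] using hle

theorem exists_integral_window_le_of_le_sub (hτ : 0 < τ) (h2τ : 2 * τ ≤ b - a)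
    (hg₀ : ∀ s ∈ Set.Icc a b, 0 ≤ g s) (hg : IntervalIntegrable g volume a b) :
    ∃ c, a ≤ c ∧ c + τ ≤ b ∧ ∫ s in c..c + τ, g s ≤ 2 * τ / (b - a) * ∫ s in a..b, g s := by
  set N := ⌊(b - a) / τ⌋₊
  have hN₁ : N * τ ≤ b - a := (le_div_iff₀ hτ).1 (Nat.floor_le (div_nonneg (by linarith) hτ.le))
  have hN₂ : b - a < (N + 1) * τ := (div_lt_iff₀ hτ).1 (Nat.lt_floor_add_one _)
  have hN : 0 < N := by
    by_contra! h
    simp only [Nat.le_zero.1 h, Nat.cast_zero, zero_add, one_mul] at hN₂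
    linarith
  have haN : a ≤ a + N * τ := le_add_of_nonneg_right (by positivity)
  have hNb : a + N * τ ≤ b := by linarith
  obtain ⟨c, hac, hcN, hc⟩ := exists_integral_window_le hτ.le hN (hg.mono_interval le_rfl haN hNb)
  refine ⟨c, hac, hcN.trans hNb, hc.trans ?_⟩
  have hpos : 0 ≤ ∫ s in a..b, g s := intervalIntegral.integral_nonneg (by linarith) hg₀
  have hN₃ : (1 : ℝ) ≤ N := by exact_mod_cast hN
  calc (∫ s in a..a + N * τ, g s) / N ≤ (∫ s in a..b, g s) / N := by
        gcongr
        exact intervalIntegral.integral_mono_interval_of_nonneg hg₀ hg le_rfl haN hNb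
    _ ≤ 2 * τ / (b - a) * ∫ s in a..b, g s := by
      rw [div_eq_inv_mul]
      gcongr
      rw [inv_le_iff_one_le_mul₀ (by positivity), div_mul_eq_mul_div, le_div_iff₀ (by linarith)]
      nlinarith

theorem exists_piece_integral_window_le {T t : ℝ} {k : ℕ} (hk : 0 < k) (hτ : 0 < τ)
    (hkτ : 2 * k * τ ≤ t) (hg₀ : ∀ s ∈ Set.Icc 0 T, 0 ≤ g s)
    (hg : IntervalIntegrable g volume 0 T) (a b : Fin k → ℝ)
    (hab : ∀ i, 0 ≤ a i ∧ a i ≤ b i ∧ b i ≤ T) (ht : ∑ i, (b i - a i) = t) :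
    ∃ i c, a i ≤ c ∧ c + τ ≤ b i ∧
      ∫ s in c..c + τ, g s ≤ 2 * k * τ / t * ∫ s in 0..T, g s := by
  have hk' : (0 : ℝ) < k := by exact_mod_cast hk
  have ht₀ : 0 < t := by nlinarith
  obtain ⟨i, -, hi⟩ := Finset.exists_le_of_sum_le (Finset.univ_nonempty_iff.2 ⟨⟨0, hk⟩⟩)
    (f := fun _ => t / k) (g := fun i => b i - a i) (by
      rw [ht, Finset.sum_const, Finset.card_univ, Fintype.card_fin, nsmul_eq_mul,
        mul_div_cancel₀ _ hk'.ne'])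
  obtain ⟨hai, haibi, hbi⟩ := hab i
  have hlong : t ≤ k * (b i - a i) := by rwa [div_le_iff₀' hk'] at hi
  have hg₀' : ∀ s ∈ Set.Icc (a i) (b i), 0 ≤ g s :=
    fun s hs => hg₀ s ⟨hai.trans hs.1, hs.2.trans hbi⟩
  obtain ⟨c, hac, hcb, hc⟩ := exists_integral_window_le_of_le_sub hτ (by nlinarith) hg₀'
    (hg.mono_interval hai haibi hbi)
  refine ⟨i, c, hac, hcb, hc.trans ?_⟩
  have hpos : 0 ≤ ∫ s in a i..b i, g s := intervalIntegral.integral_nonneg haibi hg₀'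
  gcongr ?_ * ?_
  · rw [div_le_div_iff₀ (by nlinarith) ht₀]
    nlinarith
  · exact intervalIntegral.integral_mono_interval_of_nonneg hg₀ hg hai haibi hbi

end Window

section Assembly

variable {n : ℕ} {α β K m : ℝ} {L : EuclideanSpace ℝ (Fin n) → ℝ → EuclideanSpace ℝ (Fin n) → ℝ}
  {T : ℝ} {η η' : ℝ → EuclideanSpace ℝ (Fin n)} {k : ℕ} {t : ℝ} {y : EuclideanSpace ℝ (Fin n)}

theorem mCost_le_of_window (hL : IsLagrangian n α β K m L) (hα : 0 ≤ α) (hβ : 0 ≤ β) (hK : 0 ≤ K)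
    (hm : 0 ≤ m) (hη : AdmissibleOn n 0 T η η')
    (hint : IntervalIntegrable (fun s => L (η s) s (η' s)) volume 0 T) (a b : Fin k → ℝ)
    (hab : ∀ i, 0 ≤ a i ∧ a i ≤ b i ∧ b i ≤ T) (hy : ∑ i, (η (b i) - η (a i)) = y)
    (ht : ∑ i, (b i - a i) = t) (i₀ : Fin k) {c : ℝ} (hac : a i₀ ≤ c)
    (hcb : c + (2 * k + 3) ≤ b i₀) :
    mCost n L t 0 y ≤ ∑ i, (∫ s in a i..b i, L (η s) s (η' s)) + K * (2 * k + 3) +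
      (k + 1) * (2 * (β * √n ^ m + K)) +
      (β * ((k + 1) * √n + ‖η (c + (2 * k + 3)) - η c‖) ^ m + K) * (k + 2) := by
  -- removing `2k + 3` leaves room for `k + 1` connectors of duration at most 2 and a final
  -- segment of duration at least 1
  set τ : ℝ := 2 * k + 3
  obtain ⟨ha₀, -, hbT⟩ := hab i₀
  have hτ : 0 ≤ τ := by positivity
  have hpcs : ∀ p ∈ cutWindow a b i₀ c τ, p.1 ≤ p.2 ∧ AdmissibleOn n p.1 p.2 η η' ∧
      IntervalIntegrable (fun s => L (η s) s (η' s)) volume p.1 p.2 := fun p hp => by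
    obtain ⟨h₀, h₁₂, h₂⟩ := le_of_mem_cutWindow hab hac hcb hτ p hp
    exact ⟨h₁₂, hη.mono_s14 h₀ h₁₂ h₂, hint.mono_interval h₀ h₁₂ h₂⟩
  have hpieces := mCost_le_of_pieces hL hα hβ hK hm _ hpcs (t := t) ?_ y
  · simp only [sum_map_cutWindow, length_cutWindow, Nat.cast_add, Nat.cast_one, hy,
      ht] at hpieces
    have hdisp : y - (y + (η c - η (a i₀) + (η (b i₀) - η (c + τ)) - (η (b i₀) - η (a i₀)))) =
        η (c + τ) - η c := by abel
    have hdur : t - (t + (c - a i₀ + (b i₀ - (c + τ)) - (b i₀ - a i₀))) - (k + 1) = k + 2 := by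
      ring
    have hint₁ := hint.mono_interval ha₀ hac (by linarith)
    have hint₂ := hint.mono_interval (ha₀.trans hac) (le_add_of_nonneg_right hτ) (by linarith)
    have hsplit := intervalIntegral.integral_add_adjacent_intervals (hint₁.trans hint₂)
      (hint.mono_interval (by linarith) hcb hbT)
    rw [← intervalIntegral.integral_add_adjacent_intervals hint₁ hint₂] at hsplit
    have hwindow : -K * τ ≤ ∫ s in c..c + τ, L (η s) s (η' s) := by
      simpa [mul_comm] using intervalIntegral.integral_mono_on (le_add_of_nonneg_right hτ)
        intervalIntegrable_const hint₂ fun s _ => hL.neg_le_s14 hα (η s) s (η' s)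
    rw [hdisp, hdur] at hpieces
    linarith
  · simp only [sum_map_cutWindow, length_cutWindow, ht]
    push_cast
    linarith

theorem mCost_le_of_integral_norm_rpow_le (hL : IsLagrangian n α β K m L) (hα : 0 < α)
    (hβ : 0 ≤ β) (hK : 0 ≤ K) (hm : 1 ≤ m) (hη : AdmissibleOn n 0 T η η')
    (hint : IntervalIntegrable (fun s => L (η s) s (η' s)) volume 0 T) {E : ℝ}
    (hE : ∫ s in 0..T, ‖η' s‖ ^ m ≤ E) (hk : 0 < k) (a b : Fin k → ℝ)
    (hab : ∀ i, 0 ≤ a i ∧ a i ≤ b i ∧ b i ≤ T) (hy : ∑ i, (η (b i) - η (a i)) = y)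
    (ht : ∑ i, (b i - a i) = t) (hkt : 2 * k * (2 * k + 3) ≤ t) :
    mCost n L t 0 y ≤ ∑ i, (∫ s in a i..b i, L (η s) s (η' s)) + K * (2 * k + 3) +
      (k + 1) * (2 * (β * √n ^ m + K)) +
      (β * ((k + 1) * √n + (2 * k * (2 * k + 3) / t * E + (2 * k + 3))) ^ m + K) * (k + 2) := by
  have hg := hL.intervalIntegrable_norm_rpow hα hη hint
  obtain ⟨i₀, c, hac, hcb, hwin⟩ := exists_piece_integral_window_le hk (by positivity) hkt
    (fun s _ => by positivity) hg a b hab ht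
  obtain ⟨ha₀, -, hbT⟩ := hab i₀
  have hdisp := (hη.mono_s14 (b' := c + (2 * k + 3)) (ha₀.trans hac) (by linarith)
    (by linarith)).norm_sub_le_integral_rpow_add (by linarith) hm
    (hg.mono_interval (ha₀.trans hac) (by linarith) (by linarith))
  refine (mCost_le_of_window hL hα.le hβ hK (by linarith) hη hint a b hab hy ht i₀ hac hcb).trans ?_
  have ht₀ : 0 < t := lt_of_lt_of_le (by positivity) hkt
  gcongr
  calc _ ≤ (∫ s in c..c + (2 * k + 3), ‖η' s‖ ^ m) + (2 * k + 3) := by simpa using hdisp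
    _ ≤ _ := by gcongr; exact hwin.trans (by gcongr)

theorem integral_norm_rpow_le_of_near_min (hL : IsLagrangian n α β K m L) (hα : 0 < α)
    (hβ : 0 ≤ β) (hm : 0 ≤ m) {M : ℝ} (ht : 1 ≤ t) (hy : ‖y‖ ≤ M * t)
    (hη : AdmissibleOn n 0 (2 * t) η η')
    (hint : IntervalIntegrable (fun s => L (η s) s (η' s)) volume 0 (2 * t))
    (hnear : (∫ s in (0:ℝ)..(2 * t), L (η s) s (η' s)) ≤ mCost n L (2 * t) 0 ((2 : ℝ) • y) + 1) :
    ∫ s in 0..2 * t, ‖η' s‖ ^ m ≤ t * (2 * β * M ^ m + 4 * K + 1) / α := by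
  refine (hL.integral_norm_rpow_le hα hη hint (by positivity)).trans ?_
  have hspeed : ‖(2 : ℝ) • y - 0‖ / (2 * t) ≤ M := by
    rw [sub_zero, norm_smul, Real.norm_two, div_le_iff₀ (by positivity)]
    linarith
  have hseg := mCost_le_segment hL hα.le (by positivity : 0 < 2 * t) 0 ((2 : ℝ) • y)
  have : β * (‖(2 : ℝ) • y - 0‖ / (2 * t)) ^ m ≤ β * M ^ m := by gcongr
  gcongr
  nlinarith

end Assembly

theorem mCost_le_sum_pieces_general (n : ℕ) (α β K m : ℝ)
    (hα : 0 < α) (hβ : 0 < β) (hK : 0 < K) (hm : 1 < m) (M : ℝ) (hM : 0 < M) :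
    ∃ C > 0,
      ∀ L : EuclideanSpace ℝ (Fin n) → ℝ → EuclideanSpace ℝ (Fin n) → ℝ,
        IsLagrangian n α β K m L →
        ∀ t : ℝ, 4 * ((n : ℝ) + 4) ^ 2 < t →
          ∀ y : EuclideanSpace ℝ (Fin n), ‖y‖ ≤ M * t →
            ∀ η η' : ℝ → EuclideanSpace ℝ (Fin n),
              AdmissibleOn n 0 (2 * t) η η' → η 0 = 0 → η (2 * t) = (2 : ℝ) • y →
              IntervalIntegrable (fun s => L (η s) s (η' s)) volume 0 (2 * t) →
              (∫ s in (0:ℝ)..(2 * t), L (η s) s (η' s)) ≤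
                mCost n L (2 * t) 0 ((2 : ℝ) • y) + 1 →
              ∀ k : ℕ, 0 < k → 2 * k ≤ n + 2 →
                ∀ a b : Fin k → ℝ,
                  (∀ i, 0 ≤ a i ∧ a i ≤ b i ∧ b i ≤ 2 * t) →
                  (∀ i j, i ≠ j → Disjoint (Set.Ioo (a i) (b i)) (Set.Ioo (a j) (b j))) →
                  ∑ i, (η (b i) - η (a i)) = y →
                  ∑ i, (b i - a i) = t →
                  mCost n L t 0 y ≤
                    (∑ i, ∫ s in (a i)..(b i), L (η s) s (η' s)) + C := by
  set X := 2 * β * M ^ m + 4 * K + 1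
  set R := (n + 2) * (n + 5) * X / α + (n + 5) with hR
  refine ⟨K * (n + 5) + (n + 2) * (2 * (β * √n ^ m + K)) +
    (β * ((n + 2) * √n + R) ^ m + K) * (n + 3), by positivity, ?_⟩
  intro L hL t ht y hy η η' hη _ _ hint hnear k hk hk2 a b hab _ hsumy hsumt
  have hkn : (2 * k : ℝ) ≤ n + 2 := by exact_mod_cast hk2
  have ht₁ : 1 ≤ t := by nlinarith
  have hkt : 2 * k * (2 * k + 3 : ℝ) ≤ t := by nlinarith
  have hE := integral_norm_rpow_le_of_near_min hL hα hβ.le (by linarith) ht₁ hy hη hint hnear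
  have hmain := mCost_le_of_integral_norm_rpow_le hL hα hβ.le hK.le hm.le hη hint hE hk a b hab
    hsumy hsumt hkt
  have hwin : 2 * k * (2 * k + 3) / t * (t * X / α) + (2 * k + 3) ≤ R := by
    rw [show 2 * k * (2 * k + 3) / t * (t * X / α) = 2 * k * (2 * k + 3) * X / α by
      field_simp]
    rw [hR]
    gcongr ?_ * X / α + ?_ <;> nlinarith
  have h₁ : K * (2 * k + 3) ≤ K * (n + 5) := by gcongr _ * ?_; linarith
  have h₂ : (k + 1) * (2 * (β * √n ^ m + K)) ≤ (n + 2) * (2 * (β * √n ^ m + K)) := by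
    gcongr ?_ * _; linarith
  have h₃ : (β * ((k + 1) * √n + (2 * k * (2 * k + 3) / t * (t * X / α) + (2 * k + 3))) ^ m + K) *
      (k + 2) ≤ (β * ((n + 2) * √n + R) ^ m + K) * (n + 3) := by
    gcongr (β * (?_ * √n + ?_) ^ m + K) * ?_ <;> linarith
  linarith

/-- Core estimate in the proof of superadditivity: pieces of a near-minimizer of
`m(2t, 0, 2y)` selected by Burago's lemma can be rearranged (after integer space-time shifts and
straight connectors) into a competitor for `m(t, 0, y)`, at an additional cost of at most a
constant `C` depending only on `K, M, n, α, β, m`. -/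
theorem mCost_le_sum_pieces (n : ℕ) (hn : 1 ≤ n) (α β K m : ℝ)
    (hα : 0 < α) (hβ : 0 < β) (hK : 0 < K) (hm : 1 < m) (M : ℝ) (hM : 0 < M) :
    ∃ C > 0,
      ∀ L : EuclideanSpace ℝ (Fin n) → ℝ → EuclideanSpace ℝ (Fin n) → ℝ,
        IsLagrangian n α β K m L →
        ∀ t : ℝ, 4 * ((n : ℝ) + 4) ^ 2 < t →
          ∀ y : EuclideanSpace ℝ (Fin n), ‖y‖ ≤ M * t →
            ∀ η η' : ℝ → EuclideanSpace ℝ (Fin n),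
              AdmissibleOn n 0 (2 * t) η η' → η 0 = 0 → η (2 * t) = (2 : ℝ) • y →
              IntervalIntegrable (fun s => L (η s) s (η' s)) volume 0 (2 * t) →
              (∫ s in (0:ℝ)..(2 * t), L (η s) s (η' s)) ≤
                mCost n L (2 * t) 0 ((2 : ℝ) • y) + 1 →
              ∀ k : ℕ, 0 < k → 2 * k ≤ n + 2 →
                ∀ a b : Fin k → ℝ,
                  (∀ i, 0 ≤ a i ∧ a i ≤ b i ∧ b i ≤ 2 * t) →
                  (∀ i j, i ≠ j → Disjoint (Set.Ioo (a i) (b i)) (Set.Ioo (a j) (b j))) →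
                  ∑ i, (η (b i) - η (a i)) = y →
                  ∑ i, (b i - a i) = t →
                  mCost n L t 0 y ≤
                    (∑ i, ∫ s in (a i)..(b i), L (η s) s (η' s)) + C :=
  mCost_le_sum_pieces_general n α β K m hα hβ hK hm M hM

end
end
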